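/- Let T be an n×n complex matrix that is power bounded by C with minimal polynomial m(z) = ∏_{i=1}^d (z−λ_i), and suppose r := min_{1≤i≤d} |λ_i| > 0. Then T is invertible and for every ρ ∈ (0,1), ‖T⁻¹‖² ≤ C² · (ρ²/(1−ρ²)) · ( (1/(ρ²r²))^{d} − 1 ). -/

import Mathlib

/-!
Put `α i = ρ * λ i` and let `A(z) = ∏ (1 - z / α i) / (1 - conj (α i) * z)`. Each factor is
`-(α i)⁻¹` times a Blaschke factor, and multiplication by a Blaschke factor is an isometry of
`ℓ²` on Taylor coefficients, so `A 0 = 1` and `∑ |a k|² = ∏ |α i|⁻²`. The rescaled series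
`B(z) = A(ρ z) = ∏ (1 - z / λ i) * ∏ (1 - ρ² conj (λ i) z)⁻¹` has absolutely summable
coefficients `b k`, and its polynomial factor is a multiple of the minimal polynomial; since `T`
is power bounded the series can be evaluated at `T`, multiplicatively, so `∑ b k T^k = 0`.
As `b 0 = 1`, this gives `T⁻¹ = -∑ b (k+1) T^k`, hence `‖T⁻¹‖ ≤ C ∑_{k ≥ 1} ρ^k |a k|`, and
Cauchy–Schwarz bounds the square of this by `C² ρ² / (1 - ρ²) * (∏ |α i|⁻² - 1)`, where
`|α i| ≥ ρ r`. The eigenvalues of a power-bounded operator lie in the closed unit disk, which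
keeps every `|α i| < 1`.
-/

open Polynomial (aeval)
open PowerSeries ComplexConjugate

theorem sq_tsum_mul_le_tsum_sq_mul_tsum_sq {ι : Type*} {f g : ι → ℝ} (hf : ∀ i, 0 ≤ f i)
    (hg : ∀ i, 0 ≤ g i) (hf₂ : Summable fun i => f i ^ 2) (hg₂ : Summable fun i => g i ^ 2) :
    (∑' i, f i * g i) ^ 2 ≤ (∑' i, f i ^ 2) * ∑' i, g i ^ 2 := by
  have h := Real.inner_le_Lp_mul_Lq_tsum_of_nonneg Real.HolderConjugate.two_two hf hg
    (by simpa only [Real.rpow_two] using hf₂) (by simpa only [Real.rpow_two] using hg₂)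
  simp only [Real.rpow_two, ← Real.sqrt_eq_rpow] at h
  have hfg : 0 ≤ ∑' i, f i * g i := tsum_nonneg fun i => mul_nonneg (hf i) (hg i)
  calc (∑' i, f i * g i) ^ 2 ≤ (√(∑' i, f i ^ 2) * √(∑' i, g i ^ 2)) ^ 2 := by gcongr
    _ = _ := by
      rw [mul_pow, Real.sq_sqrt (tsum_nonneg fun i => sq_nonneg _),
        Real.sq_sqrt (tsum_nonneg fun i => sq_nonneg _)]

theorem Complex.sq_norm_sub_mul_eq (u v a : ℂ) :
    ‖u - a * v‖ ^ 2 = ‖v - conj a * u‖ ^ 2 + (1 - ‖a‖ ^ 2) * (‖u‖ ^ 2 - ‖v‖ ^ 2) := by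
  simp only [Complex.sq_norm, Complex.normSq_apply, Complex.sub_re, Complex.sub_im,
    Complex.mul_re, Complex.mul_im, Complex.conj_re, Complex.conj_im]
  ring

theorem summable_sq_norm_sub {ι E : Type*} [NormedAddCommGroup E] {u v : ι → E}
    (hu : Summable fun k => ‖u k‖ ^ 2) (hv : Summable fun k => ‖v k‖ ^ 2) :
    Summable fun k => ‖u k - v k‖ ^ 2 := by
  have := ((memℓp_gen_iff (p := 2) (by norm_num)).mpr (by simpa using hu)).sub
    ((memℓp_gen_iff (p := 2) (by norm_num)).mpr (by simpa using hv))
  simpa using (memℓp_gen_iff (p := 2) (by norm_num)).mp this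

namespace PowerSeries

def wienerAlgebra : Subalgebra ℂ ℂ⟦X⟧ where
  carrier := {F | Summable fun k => ‖coeff k F‖}
  mul_mem' {F G} hF hG := by
    simpa only [Set.mem_ofPred_eq, coeff_mul] using
      summable_norm_sum_mul_antidiagonal_of_summable_norm hF hG
  add_mem' {F G} hF hG :=
    (hF.add hG).of_nonneg_of_le (fun _ => norm_nonneg _) fun k => by
      simpa only [map_add] using norm_add_le _ _
  algebraMap_mem' c := by
    refine summable_of_ne_finset_zero (s := {0}) fun k hk => ?_
    rw [Finset.mem_singleton] at hk
    simp [coeff_C, hk]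

theorem mem_wienerAlgebra {F : ℂ⟦X⟧} :
    F ∈ wienerAlgebra ↔ Summable fun k => ‖coeff k F‖ := Iff.rfl

theorem coe_mem_wienerAlgebra (p : Polynomial ℂ) : (p : ℂ⟦X⟧) ∈ wienerAlgebra :=
  summable_of_ne_finset_zero (s := p.support) fun k hk => by
    simp [Polynomial.coeff_coe, Polynomial.notMem_support_iff.mp hk]

theorem X_mem_wienerAlgebra : (X : ℂ⟦X⟧) ∈ wienerAlgebra := by
  simpa using coe_mem_wienerAlgebra Polynomial.X

theorem mk_pow_mem_wienerAlgebra {a : ℂ} (ha : ‖a‖ < 1) : mk (a ^ ·) ∈ wienerAlgebra := by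
  simpa [mem_wienerAlgebra, norm_pow] using summable_geometric_of_lt_one (norm_nonneg a) ha

theorem rescale_mem_wienerAlgebra {F : ℂ⟦X⟧} (hF : F ∈ wienerAlgebra) {c : ℂ} (hc : ‖c‖ ≤ 1) :
    rescale c F ∈ wienerAlgebra :=
  hF.of_nonneg_of_le (fun _ => norm_nonneg _) fun k => by
    rw [coeff_rescale, norm_mul, norm_pow]
    exact mul_le_of_le_one_left (norm_nonneg _) (pow_le_one₀ (norm_nonneg c) hc)

theorem mk_coeff_succ_mem_wienerAlgebra {F : ℂ⟦X⟧} (hF : F ∈ wienerAlgebra) :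
    mk (fun k => coeff (k + 1) F) ∈ wienerAlgebra := by
  simpa [mem_wienerAlgebra] using (summable_nat_add_iff 1).mpr hF

theorem summable_sq_norm_coeff {F : ℂ⟦X⟧} (hF : F ∈ wienerAlgebra) :
    Summable fun k => ‖coeff k F‖ ^ 2 :=
  (hF.mul_left (∑' k, ‖coeff k F‖)).of_nonneg_of_le (fun _ => by positivity) fun k => by
    rw [sq]
    exact mul_le_mul_of_nonneg_right (hF.le_tsum k fun _ _ => norm_nonneg _) (norm_nonneg _)

theorem tsum_sq_norm_coeff_X_sub_C_mul {G : ℂ⟦X⟧} (hG : Summable fun k => ‖coeff k G‖ ^ 2)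
    (a : ℂ) : ∑' k, ‖coeff k ((X - C a) * G)‖ ^ 2
      = ∑' k, ‖coeff k ((1 - C (conj a) * X) * G)‖ ^ 2 := by
  set u : ℕ → ℂ := fun k => coeff k (X * G)
  have hu : HasSum (fun k => ‖u k‖ ^ 2) (∑' k, ‖coeff k G‖ ^ 2) := by
    rw [← hasSum_nat_add_iff' 1]
    simpa [u, coeff_succ_X_mul] using hG.hasSum
  have hcoeff : ∀ k, coeff k ((X - C a) * G) = u k - a * coeff k G := fun k => by
    simp [u, sub_mul, coeff_C_mul]
  have hcoeff' : ∀ k, coeff k ((1 - C (conj a) * X) * G) = coeff k G - conj a * u k := fun k => by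
    simp [u, sub_mul, mul_assoc, coeff_C_mul]
  have hsum' : Summable fun k => ‖coeff k G - conj a * u k‖ ^ 2 :=
    summable_sq_norm_sub hG (by simpa [norm_mul, mul_pow] using hu.summable.mul_left (‖a‖ ^ 2))
  rw [tsum_congr fun k => by rw [hcoeff, Complex.sq_norm_sub_mul_eq],
    (hsum'.hasSum.add ((hu.sub hG.hasSum).mul_left (1 - ‖a‖ ^ 2))).tsum_eq, sub_self, mul_zero,
    add_zero]
  exact tsum_congr fun k => by rw [hcoeff']

theorem one_sub_C_mul_X_mul_mk_pow (a : ℂ) : (1 - C a * X) * mk (a ^ ·) = 1 := by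
  ext (_ | k)
  · simp
  · simp [sub_mul, mul_assoc, coeff_C_mul, coeff_succ_X_mul, coeff_one, pow_succ']

/-- The Taylor series of `(1 - z / α) / (1 - conj α * z)`, i.e. of the Blaschke factor
`(z - α) / (1 - conj α * z)` divided by its value `-α` at `0`. -/
noncomputable def blaschkeFactor (α : ℂ) : ℂ⟦X⟧ := (1 - C α⁻¹ * X) * mk (conj α ^ ·)

theorem blaschkeFactor_mem_wienerAlgebra {α : ℂ} (hα : ‖α‖ < 1) :
    blaschkeFactor α ∈ wienerAlgebra :=
  mul_mem (sub_mem (one_mem _) (mul_mem (Subalgebra.algebraMap_mem _ _) X_mem_wienerAlgebra))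
    (mk_pow_mem_wienerAlgebra (by rwa [Complex.norm_conj]))

theorem constantCoeff_blaschkeFactor (α : ℂ) : constantCoeff (blaschkeFactor α) = 1 := by
  simp [blaschkeFactor]

theorem rescale_C {R : Type*} [CommSemiring R] (a c : R) : rescale a (C c) = C c := by
  ext (_ | n) <;> simp [coeff_C]

theorem rescale_blaschkeFactor (c α : ℂ) :
    rescale c (blaschkeFactor α) = (1 - C (α⁻¹ * c) * X) * mk ((c * conj α) ^ ·) := by
  simp only [blaschkeFactor, map_mul, map_sub, map_one, rescale_X, rescale_mk, rescale_C, mul_pow]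
  rw [← mul_assoc, ← map_mul]

theorem tsum_sq_norm_coeff_blaschkeFactor_mul {α : ℂ} (hα₀ : α ≠ 0) (hα₁ : ‖α‖ < 1)
    {F : ℂ⟦X⟧} (hF : F ∈ wienerAlgebra) :
    ∑' k, ‖coeff k (blaschkeFactor α * F)‖ ^ 2 = (‖α‖ ^ 2)⁻¹ * ∑' k, ‖coeff k F‖ ^ 2 := by
  set G := mk (conj α ^ ·) * F
  have hG : G ∈ wienerAlgebra := mul_mem (mk_pow_mem_wienerAlgebra (by rwa [Complex.norm_conj])) hF
  have hF_eq : F = (1 - C (conj α) * X) * G := by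
    rw [← mul_assoc, one_sub_C_mul_X_mul_mk_pow, one_mul]
  have hBF_eq : blaschkeFactor α * F = C (-α⁻¹) * ((X - C α) * G) := by
    have : C (-α⁻¹) * (X - C α) = 1 - C α⁻¹ * X := by
      rw [mul_sub, ← map_mul, neg_mul, inv_mul_cancel₀ hα₀, map_neg, map_neg, map_one]
      ring
    rw [← mul_assoc, this, blaschkeFactor, mul_assoc]
  rw [hBF_eq, hF_eq, ← tsum_sq_norm_coeff_X_sub_C_mul (summable_sq_norm_coeff hG), ← tsum_mul_left]
  simp [coeff_C_mul, mul_pow]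

theorem tsum_sq_norm_coeff_prod_blaschkeFactor {ι : Type*} (s : Finset ι) {α : ι → ℂ}
    (hα₀ : ∀ i, α i ≠ 0) (hα₁ : ∀ i, ‖α i‖ < 1) :
    ∑' k, ‖coeff k (∏ i ∈ s, blaschkeFactor (α i))‖ ^ 2 = ∏ i ∈ s, (‖α i‖ ^ 2)⁻¹ := by
  induction s using Finset.cons_induction with
  | empty => simp [coeff_one, apply_ite]
  | cons i s hi ih =>
    rw [Finset.prod_cons, Finset.prod_cons, tsum_sq_norm_coeff_blaschkeFactor_mul (hα₀ i) (hα₁ i)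
      (Subalgebra.prod_mem _ fun j _ => blaschkeFactor_mem_wienerAlgebra (hα₁ j)), ih]

theorem sq_tsum_norm_coeff_succ_rescale_le {F : ℂ⟦X⟧} (hF : Summable fun k => ‖coeff k F‖ ^ 2)
    {ρ : ℝ} (hρ₀ : 0 ≤ ρ) (hρ₁ : ρ < 1) :
    (∑' k, ‖coeff (k + 1) (rescale (ρ : ℂ) F)‖) ^ 2
      ≤ ρ ^ 2 / (1 - ρ ^ 2) * (∑' k, ‖coeff k F‖ ^ 2 - ‖constantCoeff F‖ ^ 2) := by
  have hρ₂ : ρ ^ 2 < 1 := by nlinarith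
  have hgeom : HasSum (fun k : ℕ => (ρ ^ (k + 1)) ^ 2) (ρ ^ 2 / (1 - ρ ^ 2)) := by
    rw [show (fun k : ℕ => (ρ ^ (k + 1)) ^ 2) = fun k => ρ ^ 2 * (ρ ^ 2) ^ k from
      funext fun k => by ring, div_eq_mul_inv]
    exact (hasSum_geometric_of_lt_one (by positivity) hρ₂).mul_left (ρ ^ 2)
  have htail : HasSum (fun k => ‖coeff (k + 1) F‖ ^ 2)
      (∑' k, ‖coeff k F‖ ^ 2 - ‖constantCoeff F‖ ^ 2) := by
    simpa using (hasSum_nat_add_iff' 1).mpr hF.hasSum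
  have hcoeff : ∀ k, ‖coeff (k + 1) (rescale (ρ : ℂ) F)‖ = ρ ^ (k + 1) * ‖coeff (k + 1) F‖ :=
    fun k => by simp [coeff_rescale, abs_of_nonneg hρ₀]
  rw [tsum_congr hcoeff, ← hgeom.tsum_eq, ← htail.tsum_eq]
  exact sq_tsum_mul_le_tsum_sq_mul_tsum_sq (fun k => by positivity) (fun k => norm_nonneg _)
    hgeom.summable htail.summable

section Eval

variable {𝔸 : Type*} [NormedRing 𝔸] [NormedAlgebra ℂ 𝔸]

noncomputable def tsumEval (F : ℂ⟦X⟧) (a : 𝔸) : 𝔸 := ∑' k, coeff k F • a ^ k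

theorem tsumEval_coe (p : Polynomial ℂ) (a : 𝔸) :
    tsumEval (p : ℂ⟦X⟧) a = Polynomial.aeval a p := by
  have hzero : ∀ k ∉ Finset.range (p.natDegree + 1), p.coeff k • a ^ k = 0 := fun k hk => by
    rw [Polynomial.coeff_eq_zero_of_natDegree_lt (by simp at hk; omega), zero_smul]
  simp only [tsumEval, Polynomial.coeff_coe, Polynomial.aeval_eq_sum_range, tsum_eq_sum hzero]

variable {a : 𝔸} {M : ℝ}

theorem summable_norm_coeff_smul_pow (ha : ∀ k, ‖a ^ k‖ ≤ M) {F : ℂ⟦X⟧}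
    (hF : F ∈ wienerAlgebra) : Summable fun k => ‖coeff k F • a ^ k‖ :=
  (hF.mul_right M).of_nonneg_of_le (fun _ => norm_nonneg _) fun k => by
    rw [norm_smul]
    exact mul_le_mul_of_nonneg_left (ha k) (norm_nonneg _)

theorem norm_tsumEval_le (ha : ∀ k, ‖a ^ k‖ ≤ M) {F : ℂ⟦X⟧} (hF : F ∈ wienerAlgebra) :
    ‖tsumEval F a‖ ≤ M * ∑' k, ‖coeff k F‖ := by
  rw [← tsum_mul_left]
  refine (norm_tsum_le_tsum_norm (summable_norm_coeff_smul_pow ha hF)).trans ?_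
  refine (summable_norm_coeff_smul_pow ha hF).tsum_le_tsum (fun k => ?_) (hF.mul_left M)
  rw [norm_smul, mul_comm]
  exact mul_le_mul_of_nonneg_right (ha k) (norm_nonneg _)

variable [CompleteSpace 𝔸]

theorem tsumEval_mul (ha : ∀ k, ‖a ^ k‖ ≤ M) {F G : ℂ⟦X⟧} (hF : F ∈ wienerAlgebra)
    (hG : G ∈ wienerAlgebra) :
    tsumEval (F * G) a = tsumEval F a * tsumEval G a := by
  rw [tsumEval, tsumEval, tsumEval, tsum_mul_tsum_eq_tsum_sum_antidiagonal_of_summable_norm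
    (summable_norm_coeff_smul_pow ha hF) (summable_norm_coeff_smul_pow ha hG)]
  refine tsum_congr fun n => ?_
  rw [coeff_mul, Finset.sum_smul]
  refine Finset.sum_congr rfl fun p hp => ?_
  rw [smul_mul_smul_comm, ← pow_add, Finset.HasAntidiagonal.mem_antidiagonal.mp hp]

theorem mul_neg_tsumEval_shift_eq_one (ha : ∀ k, ‖a ^ k‖ ≤ M) {F : ℂ⟦X⟧}
    (hF : F ∈ wienerAlgebra) (hF₀ : constantCoeff F = 1) (hFa : tsumEval F a = 0) :
    a * -tsumEval (mk fun k => coeff (k + 1) F) a = 1 ∧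
      -tsumEval (mk fun k => coeff (k + 1) F) a * a = 1 := by
  have hsum := (summable_norm_coeff_smul_pow ha (mk_coeff_succ_mem_wienerAlgebra hF)).of_norm
  have htail : ∑' k, coeff (k + 1) F • a ^ (k + 1) = -1 := by
    have := (summable_norm_coeff_smul_pow ha hF).of_norm.tsum_eq_zero_add
    rw [← tsumEval, hFa, coeff_zero_eq_constantCoeff_apply, hF₀] at this
    simpa [eq_neg_iff_add_eq_zero, add_comm] using this.symm
  constructor
  · rw [mul_neg, tsumEval, ← hsum.tsum_mul_left]
    simp [← pow_succ', htail]
  · rw [neg_mul, tsumEval, ← hsum.tsum_mul_right]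
    simp [← pow_succ, htail]

end Eval

end PowerSeries

theorem exists_mul_eq_smul_of_isRoot_minpoly {K A : Type*} [Field K] [Ring A] [Algebra K A]
    {a : A} (ha : IsIntegral K a) {μ : K} (hμ : (minpoly K a).IsRoot μ) :
    ∃ b ≠ 0, a * b = μ • b := by
  obtain ⟨q, hq⟩ := Polynomial.dvd_iff_isRoot.mpr hμ
  have hq₀ : q ≠ 0 := by
    rintro rfl
    exact minpoly.ne_zero ha (by rw [hq, mul_zero])
  refine ⟨aeval a q, fun h => ?_, ?_⟩
  · have := minpoly.min K a
      ((Polynomial.monic_X_sub_C μ).of_mul_monic_left (hq ▸ minpoly.monic ha)) h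
    rw [hq, Polynomial.degree_mul, Polynomial.degree_X_sub_C,
      Polynomial.degree_eq_natDegree hq₀] at this
    norm_cast at this
    omega
  · have := minpoly.aeval K a
    rw [hq, map_mul] at this
    simpa [sub_mul, sub_eq_zero, Algebra.smul_def] using this

theorem norm_le_one_of_isRoot_minpoly {𝔸 : Type*} [NormedRing 𝔸] [NormedAlgebra ℂ 𝔸] {a : 𝔸}
    (ha : IsIntegral ℂ a) {M : ℝ} (hM : ∀ k, ‖a ^ k‖ ≤ M) {μ : ℂ}
    (hμ : (minpoly ℂ a).IsRoot μ) : ‖μ‖ ≤ 1 := by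
  obtain ⟨b, hb₀, hab⟩ := exists_mul_eq_smul_of_isRoot_minpoly ha hμ
  have hpow : ∀ k, a ^ k * b = μ ^ k • b := fun k => by
    induction k with
    | zero => simp
    | succ k ih => rw [pow_succ, mul_assoc, hab, mul_smul_comm, ih, smul_smul, pow_succ']
  have hbound : ∀ k, ‖μ‖ ^ k ≤ M := fun k => by
    refine le_of_mul_le_mul_right ?_ (norm_pos_iff.mpr hb₀)
    calc ‖μ‖ ^ k * ‖b‖ = ‖a ^ k * b‖ := by rw [hpow, norm_smul, norm_pow]
      _ ≤ M * ‖b‖ := (norm_mul_le _ _).trans (by gcongr; exact hM k)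
  by_contra! h
  obtain ⟨k, hk⟩ := pow_unbounded_of_one_lt M h
  exact (hbound k).not_gt hk

theorem aeval_prod_one_sub_C_inv_mul_X_eq_zero {K A ι : Type*} [Field K] [Ring A] [Algebra K A]
    {a : A} {s : Finset ι} {μ : ι → K}
    (ha : aeval a (∏ i ∈ s, (Polynomial.X - Polynomial.C (μ i))) = 0) (hμ : ∀ i ∈ s, μ i ≠ 0) :
    aeval a (∏ i ∈ s, (1 - Polynomial.C (μ i)⁻¹ * Polynomial.X)) = 0 := by
  refine Polynomial.aeval_eq_zero_of_dvd_aeval_eq_zero (Finset.prod_dvd_prod_of_dvd _ _ fun i hi =>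
    ⟨Polynomial.C (-(μ i)⁻¹), ?_⟩) ha
  rw [sub_mul, ← Polynomial.C_mul, mul_neg, mul_inv_cancel₀ (hμ i hi)]
  simp only [map_neg, map_one]
  ring

theorem exists_inverse_and_sq_norm_le {𝔸 : Type*} [NormedRing 𝔸] [NormedAlgebra ℂ 𝔸]
    [CompleteSpace 𝔸] {a : 𝔸} {M : ℝ} (ha : ∀ k, ‖a ^ k‖ ≤ M) {ι : Type*} [Fintype ι]
    {μ : ι → ℂ} (haμ : aeval a (∏ i, (Polynomial.X - Polynomial.C (μ i))) = 0)
    (hμ₀ : ∀ i, μ i ≠ 0) (hμ₁ : ∀ i, ‖μ i‖ ≤ 1) {ρ : ℝ} (hρ₀ : 0 < ρ) (hρ₁ : ρ < 1) :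
    ∃ b, a * b = 1 ∧ b * a = 1 ∧
      ‖b‖ ^ 2 ≤ M ^ 2 * (ρ ^ 2 / (1 - ρ ^ 2)) * (∏ i, (ρ ^ 2 * ‖μ i‖ ^ 2)⁻¹ - 1) := by
  set α : ι → ℂ := fun i => ρ * μ i
  have hρ : (ρ : ℂ) ≠ 0 := by exact_mod_cast hρ₀.ne'
  have hnorm_α : ∀ i, ‖α i‖ = ρ * ‖μ i‖ := fun i => by simp [α, abs_of_pos hρ₀]
  have hα₀ : ∀ i, α i ≠ 0 := fun i => mul_ne_zero hρ (hμ₀ i)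
  have hα₁ : ∀ i, ‖α i‖ < 1 := fun i => by
    rw [hnorm_α]
    nlinarith [hμ₁ i, norm_nonneg (μ i)]
  set A := ∏ i, blaschkeFactor (α i)
  have hA : A ∈ wienerAlgebra :=
    Subalgebra.prod_mem _ fun i _ => blaschkeFactor_mem_wienerAlgebra (hα₁ i)
  have hA₀ : constantCoeff A = 1 := by simp [A, map_prod, constantCoeff_blaschkeFactor]
  set B := rescale (ρ : ℂ) A
  have hB : B ∈ wienerAlgebra := rescale_mem_wienerAlgebra hA (by simp [abs_of_pos hρ₀, hρ₁.le])
  have hB₀ : constantCoeff B = 1 := by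
    rw [← coeff_zero_eq_constantCoeff_apply, coeff_rescale, coeff_zero_eq_constantCoeff_apply, hA₀,
      pow_zero, one_mul]
  have hBa : tsumEval B a = 0 := by
    have hfactor : B = ((∏ i, (1 - Polynomial.C (μ i)⁻¹ * Polynomial.X) : Polynomial ℂ) : ℂ⟦X⟧)
        * ∏ i, mk ((ρ * conj (α i)) ^ ·) := by
      have hinv : ∀ i, (α i)⁻¹ * ρ = (μ i)⁻¹ := fun i => by
        rw [mul_inv, mul_right_comm, inv_mul_cancel₀ hρ, one_mul]
      rw [← Polynomial.coeToPowerSeries.ringHom_apply, map_prod]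
      simp only [B, A, map_prod, rescale_blaschkeFactor, hinv, Finset.prod_mul_distrib,
        Polynomial.coeToPowerSeries.ringHom_apply, Polynomial.coe_sub, Polynomial.coe_one,
        Polynomial.coe_mul, Polynomial.coe_C, Polynomial.coe_X]
    rw [hfactor, tsumEval_mul ha (coe_mem_wienerAlgebra _) (Subalgebra.prod_mem _ fun i _ =>
        mk_pow_mem_wienerAlgebra ?_), tsumEval_coe,
      aeval_prod_one_sub_C_inv_mul_X_eq_zero haμ (fun i _ => hμ₀ i), zero_mul]
    rw [norm_mul, Complex.norm_conj, hnorm_α, Complex.norm_real, Real.norm_of_nonneg hρ₀.le]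
    nlinarith [hα₁ i, hnorm_α i]
  obtain ⟨h₁, h₂⟩ := mul_neg_tsumEval_shift_eq_one ha hB hB₀ hBa
  refine ⟨_, h₁, h₂, ?_⟩
  calc ‖-tsumEval (mk fun k => coeff (k + 1) B) a‖ ^ 2 ≤ (M * ∑' k, ‖coeff (k + 1) B‖) ^ 2 := by
        rw [norm_neg]
        gcongr
        simpa using norm_tsumEval_le ha (mk_coeff_succ_mem_wienerAlgebra hB)
    _ = M ^ 2 * (∑' k, ‖coeff (k + 1) B‖) ^ 2 := mul_pow _ _ _
    _ ≤ M ^ 2 * (ρ ^ 2 / (1 - ρ ^ 2) * (∑' k, ‖coeff k A‖ ^ 2 - ‖constantCoeff A‖ ^ 2)) := by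
        gcongr
        exact sq_tsum_norm_coeff_succ_rescale_le (summable_sq_norm_coeff hA) hρ₀.le hρ₁
    _ = M ^ 2 * (ρ ^ 2 / (1 - ρ ^ 2)) * (∏ i, (ρ ^ 2 * ‖μ i‖ ^ 2)⁻¹ - 1) := by
        rw [tsum_sq_norm_coeff_prod_blaschkeFactor _ hα₀ hα₁, hA₀]
        simp only [hnorm_α, mul_pow, norm_one, one_pow]
        ring

theorem inverse_squared_bound_general
    {E : Type*} [NormedAddCommGroup E] [NormedSpace ℂ E] [FiniteDimensional ℂ E]
    (T : E →L[ℂ] E) (C : ℝ) (hpb : ∀ j : ℕ, ‖T ^ j‖ ≤ C)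
    (d : ℕ) (hd : 0 < d) (lam : Fin d → ℂ)
    (hmin : minpoly ℂ T = ∏ i : Fin d, (Polynomial.X - Polynomial.C (lam i)))
    (r : ℝ)
    (hr : r = Finset.inf' Finset.univ (Finset.univ_nonempty_iff.mpr ⟨⟨0, hd⟩⟩)
      (fun i => ‖lam i‖))
    (hrpos : 0 < r) :
    ∃ S : E →L[ℂ] E, T * S = 1 ∧ S * T = 1 ∧
      ∀ ρ : ℝ, 0 < ρ → ρ < 1 →
        ‖S‖ ^ 2 ≤ C ^ 2 * (ρ ^ 2 / (1 - ρ ^ 2)) * ((1 / (ρ ^ 2 * r ^ 2)) ^ d - 1) := by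
  have hr_le : ∀ i, r ≤ ‖lam i‖ := fun i => hr ▸ Finset.inf'_le _ (Finset.mem_univ i)
  have hlam₀ : ∀ i, lam i ≠ 0 := fun i h => by simpa [h] using hrpos.trans_le (hr_le i)
  have hlam₁ : ∀ i, ‖lam i‖ ≤ 1 := fun i =>
    norm_le_one_of_isRoot_minpoly (IsIntegral.of_finite ℂ T) hpb <| hmin ▸
      (Polynomial.isRoot_prod _ _ _).mpr ⟨i, Finset.mem_univ i, Polynomial.root_X_sub_C.mpr rfl⟩
  have hT : aeval T (∏ i, (Polynomial.X - Polynomial.C (lam i))) = 0 := hmin ▸ minpoly.aeval ℂ T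
  obtain ⟨S, hTS, hST, -⟩ :=
    exists_inverse_and_sq_norm_le hpb hT hlam₀ hlam₁ (ρ := 1 / 2) (by norm_num) (by norm_num)
  refine ⟨S, hTS, hST, fun ρ hρ₀ hρ₁ => ?_⟩
  obtain ⟨S', hTS', -, hS'⟩ := exists_inverse_and_sq_norm_le hpb hT hlam₀ hlam₁ hρ₀ hρ₁
  rw [left_inv_eq_right_inv hST hTS']
  refine hS'.trans (mul_le_mul_of_nonneg_left (sub_le_sub_right ?_ 1) ?_)
  · calc ∏ i, (ρ ^ 2 * ‖lam i‖ ^ 2)⁻¹ ≤ ∏ _i : Fin d, 1 / (ρ ^ 2 * r ^ 2) :=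
          Finset.prod_le_prod (fun i _ => by positivity) fun i _ => by
            rw [one_div]
            gcongr
            exact hr_le i
      _ = (1 / (ρ ^ 2 * r ^ 2)) ^ d := by simp
  · have : ρ ^ 2 < 1 := by nlinarith
    have : 0 < 1 - ρ ^ 2 := by linarith
    positivity

/-- If T is power bounded by C with minimal polynomial ∏_{i=1}^d (z−λ_i) and
r := min_i |λ_i| > 0, then T is invertible and for every ρ ∈ (0,1),
‖T⁻¹‖² ≤ C²·(ρ²/(1−ρ²))·((1/(ρ²r²))^d − 1). -/
theorem inverse_squared_bound
    {E : Type*} [NormedAddCommGroup E] [NormedSpace ℂ E] [FiniteDimensional ℂ E]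
    (n : ℕ) (hn : 1 ≤ n) (hdim : Module.finrank ℂ E = n)
    (T : E →L[ℂ] E) (C : ℝ) (hC : 1 ≤ C) (hpb : ∀ j : ℕ, ‖T ^ j‖ ≤ C)
    (d : ℕ) (hd : 0 < d) (lam : Fin d → ℂ)
    (hmin : minpoly ℂ T = ∏ i : Fin d, (Polynomial.X - Polynomial.C (lam i)))
    (r : ℝ)
    (hr : r = Finset.inf' Finset.univ (Finset.univ_nonempty_iff.mpr ⟨⟨0, hd⟩⟩)
      (fun i => ‖lam i‖))
    (hrpos : 0 < r) :
    ∃ S : E →L[ℂ] E, T * S = 1 ∧ S * T = 1 ∧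
      ∀ ρ : ℝ, 0 < ρ → ρ < 1 →
        ‖S‖ ^ 2 ≤ C ^ 2 * (ρ ^ 2 / (1 - ρ ^ 2)) * ((1 / (ρ ^ 2 * r ^ 2)) ^ d - 1) :=
  inverse_squared_bound_general T C hpb d hd lam hmin r hr hrpos
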